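/- arXiv:2605.17466 — 2 statements merged into one kernel-verified Lean document; each statement's English description precedes it below -/
import Mathlib

section
/- Let n ≥ 2 be a natural number and let q be a real number with 0 < q ≤ 1/8 and q < √(2/n). Then C_H(n,q) < C_Y(n,q). -/
open Real

/-- `A(n,q) = 2/n - q²`. -/
noncomputable def ssyA (n : ℕ) (q : ℝ) : ℝ := 2 / n - q ^ 2

/-- The Young-closure constant `C_Y(n,q)`. -/
noncomputable def CY (n : ℕ) (q : ℝ) : ℝ :=
  (2 ^ (1 + q) * q ^ q / (1 + q) ^ (1 + q)) *
    ((2 + q) * (1 + 2 * (1 + q) / ssyA n q +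
      8 * (1 + q) * (q ^ 2 + 2 * q + 2) / (ssyA n q) ^ 2)) ^ (1 + q)

/-- The Hölder-closure constant `C_H(n,q)`. -/
noncomputable def CH (n : ℕ) (q : ℝ) : ℝ :=
  (2 * (1 + q) ^ 2 * (1 + 2 * (1 + q) ^ 2 / ssyA n q +
      8 * (1 + q) ^ 2 * (q ^ 2 + 2 * q + 2) / (ssyA n q) ^ 2)) ^ (1 + q)

/-- The key logarithmic inequality: for `0 < q ≤ 1/8`,
`(1+q)(4 log(1+q) - log(2+q)) ≤ q log q`. -/
lemma ssy_core_log (q : ℝ) (hq0 : 0 < q) (hq18 : q ≤ 1 / 8) :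
    (1 + q) * (4 * Real.log (1 + q) - Real.log (2 + q)) ≤ q * Real.log q := by
  have hl : (0.6931471803 : ℝ) < Real.log 2 := Real.log_two_gt_d9
  have hl' : Real.log 2 < 0.6931471808 := Real.log_two_lt_d9
  have h1 : q * Real.log q ≥ q * (1 - 3 * Real.log 2) - 1 / 8 := by
    have h := Real.log_le_sub_one_of_pos (show (0:ℝ) < 1 / (8 * q) by positivity)
    have hlog : Real.log (1 / (8 * q)) = -(Real.log 8 + Real.log q) := by
      rw [one_div, Real.log_inv, Real.log_mul (by norm_num) (ne_of_gt hq0)]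
    have h8 : Real.log 8 = 3 * Real.log 2 := by
      rw [show (8:ℝ) = 2 ^ (3:ℕ) by norm_num, Real.log_pow]; push_cast; ring
    rw [hlog, h8] at h
    have h' : -(3 * Real.log 2) - Real.log q ≤ 1 / (8 * q) - 1 := by linarith
    have hmul := mul_le_mul_of_nonneg_left h' hq0.le
    have hq' : q * (1 / (8 * q)) = 1 / 8 := by field_simp
    nlinarith [hmul]
  have h2 : Real.log (1 + q) ≤ q := by
    have := Real.log_le_sub_one_of_pos (show (0:ℝ) < 1 + q by linarith)
    linarith
  have h2q : (0:ℝ) < 2 + q := by linarith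
  have h3 : Real.log 2 + q / (2 + q) ≤ Real.log (2 + q) := by
    have h := Real.log_le_sub_one_of_pos (show (0:ℝ) < 2 / (2 + q) by positivity)
    have hlog : Real.log (2 / (2 + q)) = Real.log 2 - Real.log (2 + q) :=
      Real.log_div (by norm_num) (ne_of_gt h2q)
    have he : (2:ℝ) / (2 + q) - 1 = -(q / (2 + q)) := by field_simp; ring
    rw [hlog, he] at h
    linarith
  have hr : q / (2 + q) * (2 + q) = q := div_mul_cancel₀ _ (ne_of_gt h2q)
  have hkey : (1 + q) * (4 * q - Real.log 2 - q / (2 + q)) ≤ q * (1 - 3 * Real.log 2) - 1 / 8 := by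
    nlinarith [hr, mul_pos hq0 h2q, sq_nonneg (q - 1/8),
      mul_nonneg (sub_nonneg.mpr hq18) hq0.le,
      mul_nonneg (sub_nonneg.mpr hq18) (sub_nonneg.mpr hl.le),
      mul_nonneg hq0.le (sub_nonneg.mpr hl.le)]
  nlinarith [mul_le_mul_of_nonneg_left h2 (show (0:ℝ) ≤ 4 * (1 + q) by linarith),
    mul_le_mul_of_nonneg_left h3 (show (0:ℝ) ≤ 1 + q by linarith)]

/-- The key power inequality: for `0 < q ≤ 1/8`, `(1+q)⁴ ≤ q^(q/(1+q)) (2+q)`. -/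
lemma ssy_core_pow (q : ℝ) (hq0 : 0 < q) (hq18 : q ≤ 1 / 8) :
    (1 + q) ^ 4 ≤ q ^ (q / (1 + q)) * (2 + q) := by
  have hp : (0:ℝ) < 1 + q := by linarith
  have h2q : (0:ℝ) < 2 + q := by linarith
  have hbase : (0:ℝ) < (1 + q) ^ 4 / (2 + q) := by positivity
  have hle : Real.log ((1 + q) ^ 4 / (2 + q)) ≤ q / (1 + q) * Real.log q := by
    rw [Real.log_div (by positivity) (ne_of_gt h2q), Real.log_pow,
      div_mul_eq_mul_div, le_div_iff₀ hp]
    push_cast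
    nlinarith [ssy_core_log q hq0 hq18]
  have h := Real.exp_le_exp.mpr hle
  rw [Real.exp_log hbase] at h
  rw [Real.rpow_def_of_pos hq0, mul_comm (Real.log q)]
  rw [div_le_iff₀ h2q] at h
  linarith [h]

theorem holder_constant_lt_young_constant (n : ℕ) (hn : 2 ≤ n) (q : ℝ)
    (hq0 : 0 < q) (hq18 : q ≤ 1 / 8) (hqn : q < Real.sqrt (2 / n)) :
    CH n q < CY n q := by
  unfold CH CY ssyA
  have hnR : (2:ℝ) ≤ (n:ℝ) := by exact_mod_cast hn
  have h2n : (0:ℝ) < 2 / n := by positivity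
  have hA : (0:ℝ) < 2 / n - q ^ 2 := by
    have hs := Real.sq_sqrt h2n.le
    nlinarith [Real.sqrt_nonneg (2/(n:ℝ))]
  set A : ℝ := 2 / n - q ^ 2 with hAdef
  set D : ℝ := q ^ 2 + 2 * q + 2 with hDdef
  set XY : ℝ := 1 + 2 * (1 + q) / A + 8 * (1 + q) * D / A ^ 2 with hXYdef
  set XH : ℝ := 1 + 2 * (1 + q) ^ 2 / A + 8 * (1 + q) ^ 2 * D / A ^ 2 with hXHdef
  clear_value A D XY XH
  clear hqn hnR h2n
  have hA0 : A ≠ 0 := ne_of_gt hA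
  have hp : (0:ℝ) < 1 + q := by linarith
  have h2q : (0:ℝ) < 2 + q := by linarith
  have hDpos : (0:ℝ) < D := by rw [hDdef]; nlinarith
  have hXYpos : (0:ℝ) < XY := by
    have t1 : (0:ℝ) < 2 * (1 + q) / A := div_pos (by linarith) hA
    have t2 : (0:ℝ) < 8 * (1 + q) * D / A ^ 2 :=
      div_pos (by nlinarith) (pow_pos hA 2)
    rw [hXYdef]; linarith
  have hXHeq : XH = (1 + q) * XY - q := by
    rw [hXHdef, hXYdef]; field_simp; ring
  have hXHpos : (0:ℝ) < XH := by
    have t1 : (0:ℝ) < 2 * (1 + q) ^ 2 / A := div_pos (by nlinarith) hA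
    have t2 : (0:ℝ) < 8 * (1 + q) ^ 2 * D / A ^ 2 :=
      div_pos (by nlinarith) (pow_pos hA 2)
    rw [hXHdef]; linarith
  set s : ℝ := q ^ (q / (1 + q)) with hsdef
  have hs : (0:ℝ) < s := Real.rpow_pos_of_pos hq0 _
  have hsq : s ^ (1 + q) = q ^ q := by
    rw [hsdef, ← Real.rpow_mul hq0.le, div_mul_cancel₀ _ (ne_of_gt hp)]
  have hcore : (1 + q) ^ 4 ≤ s * (2 + q) := by rw [hsdef]; exact ssy_core_pow q hq0 hq18
  clear_value s
  have hbase : 2 * (1 + q) ^ 2 * XH < (2 * s / (1 + q)) * ((2 + q) * XY) := by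
    have h1 : 2 * (1 + q) ^ 2 * XH < 2 * (1 + q) ^ 3 * XY := by
      rw [hXHeq]; nlinarith
    have h2 : 2 * (1 + q) ^ 3 * XY ≤ 2 * s / (1 + q) * ((2 + q) * XY) := by
      rw [div_mul_eq_mul_div, le_div_iff₀ hp]
      nlinarith [mul_le_mul_of_nonneg_left hcore (by linarith : (0:ℝ) ≤ 2 * XY)]
    linarith
  have h2s : (0:ℝ) ≤ 2 * s := by linarith
  have hCY : ((2 * s / (1 + q)) * ((2 + q) * XY)) ^ (1 + q)
      = (2 ^ (1 + q) * q ^ q / (1 + q) ^ (1 + q)) * ((2 + q) * XY) ^ (1 + q) := by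
    rw [Real.mul_rpow (div_nonneg h2s hp.le) (mul_nonneg h2q.le hXYpos.le),
      Real.div_rpow h2s hp.le,
      Real.mul_rpow (by norm_num : (0:ℝ) ≤ 2) hs.le, hsq]
  rw [← hCY]
  exact Real.rpow_lt_rpow (mul_nonneg (by positivity) hXHpos.le) hbase hp
end

section
/- Let q > 0, let X, Y, Z, F, K, a, b be nonnegative real numbers, and let h be a real number. Assume X ≤ a·F + b·h²·K, F ≤ X^(q/(1+q)) · Y^(1/(1+q)), and K ≤ X^(q/(1+q)) · Z^(1/(1+q)). Then X ≤ 2^q · a^(1+q) · Y + 2^q · b^(1+q) · |h|^(2+2q) · Z. -/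
open Real

lemma real_rpow_add_le_mul (x y : ℝ) (hx : 0 ≤ x) (hy : 0 ≤ y) {p : ℝ} (hp : 1 ≤ p) :
    (x + y) ^ p ≤ (2 : ℝ) ^ (p - 1) * (x ^ p + y ^ p) := by
  have := NNReal.rpow_add_le_mul_rpow_add_rpow x.toNNReal y.toNNReal hp
  have h2 := NNReal.coe_le_coe.2 this
  push_cast [NNReal.coe_rpow, Real.coe_toNNReal x hx, Real.coe_toNNReal y hy] at h2
  exact h2

theorem cmc_holder_absorption (q X Y Z F K a b : ℝ) (h : ℝ) (hq : 0 < q)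
    (hX : 0 ≤ X) (hY : 0 ≤ Y) (hZ : 0 ≤ Z) (hF : 0 ≤ F) (hK : 0 ≤ K)
    (ha : 0 ≤ a) (hb : 0 ≤ b)
    (hXFK : X ≤ a * F + b * h ^ 2 * K)
    (hFbound : F ≤ X ^ (q / (1 + q)) * Y ^ (1 / (1 + q)))
    (hKbound : K ≤ X ^ (q / (1 + q)) * Z ^ (1 / (1 + q))) :
    X ≤ 2 ^ q * a ^ (1 + q) * Y + 2 ^ q * b ^ (1 + q) * |h| ^ (2 + 2 * q) * Z := by
  have hp0 : (0:ℝ) < 1 + q := by linarith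
  have hp1 : (1:ℝ) ≤ 1 + q := by linarith
  have hrhs0 : 0 ≤ 2 ^ q * a ^ (1 + q) * Y + 2 ^ q * b ^ (1 + q) * |h| ^ (2 + 2 * q) * Z := by
    have h1 : (0:ℝ) ≤ 2 ^ q := Real.rpow_nonneg (by norm_num) q
    have := Real.rpow_nonneg ha (1 + q)
    have := Real.rpow_nonneg hb (1 + q)
    have := Real.rpow_nonneg (abs_nonneg h) (2 + 2 * q)
    positivity
  rcases eq_or_lt_of_le hX with hX0 | hX0
  · rw [← hX0]; exact hrhs0
  -- main case X > 0
  set C := a * Y ^ (1 / (1 + q)) + b * h ^ 2 * Z ^ (1 / (1 + q)) with hC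
  have hstep : X ≤ X ^ (q / (1 + q)) * C := by
    calc X ≤ a * F + b * h ^ 2 * K := hXFK
      _ ≤ a * (X ^ (q / (1 + q)) * Y ^ (1 / (1 + q)))
            + b * h ^ 2 * (X ^ (q / (1 + q)) * Z ^ (1 / (1 + q))) := by
          gcongr
      _ = X ^ (q / (1 + q)) * C := by rw [hC]; ring
  have hXsplit : X = X ^ (q / (1 + q)) * X ^ (1 / (1 + q)) := by
    rw [← Real.rpow_add hX0, ← add_div, show q + 1 = 1 + q from add_comm q 1,
      div_self hp0.ne', Real.rpow_one]
  have hXq : 0 < X ^ (q / (1 + q)) := Real.rpow_pos_of_pos hX0 _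
  have hroot : X ^ (1 / (1 + q)) ≤ C := by
    have := hstep
    nth_rewrite 1 [hXsplit] at this
    exact le_of_mul_le_mul_left this hXq
  have hCnn : 0 ≤ C := le_trans (Real.rpow_nonneg hX _) hroot
  have hXC : X ≤ C ^ (1 + q) := by
    have := Real.rpow_le_rpow (Real.rpow_nonneg hX _) hroot hp0.le
    rwa [← Real.rpow_mul hX, one_div, inv_mul_cancel₀ hp0.ne', Real.rpow_one] at this
  have key : C ^ (1 + q) ≤ 2 ^ ((1 + q) - 1) *
      ((a * Y ^ (1 / (1 + q))) ^ (1 + q) + (b * h ^ 2 * Z ^ (1 / (1 + q))) ^ (1 + q)) := by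
    apply real_rpow_add_le_mul <;> [skip; skip; exact hp1]
    · positivity
    · positivity
  have e1 : (a * Y ^ (1 / (1 + q))) ^ (1 + q) = a ^ (1 + q) * Y := by
    rw [Real.mul_rpow ha (Real.rpow_nonneg hY _), ← Real.rpow_mul hY,
      one_div, inv_mul_cancel₀ hp0.ne', Real.rpow_one]
  have e2 : (b * h ^ 2 * Z ^ (1 / (1 + q))) ^ (1 + q)
      = b ^ (1 + q) * |h| ^ (2 + 2 * q) * Z := by
    have hh2 : (0:ℝ) ≤ h ^ 2 := sq_nonneg h
    rw [Real.mul_rpow (by positivity) (Real.rpow_nonneg hZ _),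
      Real.mul_rpow hb hh2, ← Real.rpow_mul hZ,
      one_div, inv_mul_cancel₀ hp0.ne', Real.rpow_one]
    congr 1
    rw [← sq_abs, ← Real.rpow_natCast |h| 2, ← Real.rpow_mul (abs_nonneg h),
      show ((2:ℕ):ℝ) * (1 + q) = 2 + 2 * q by push_cast; ring]
  calc X ≤ C ^ (1 + q) := hXC
    _ ≤ 2 ^ ((1 + q) - 1) * ((a * Y ^ (1 / (1 + q))) ^ (1 + q)
          + (b * h ^ 2 * Z ^ (1 / (1 + q))) ^ (1 + q)) := key
    _ = 2 ^ q * a ^ (1 + q) * Y + 2 ^ q * b ^ (1 + q) * |h| ^ (2 + 2 * q) * Z := by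
        rw [e1, e2]; ring_nf
end
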